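/- arXiv:1501.00239 — 2 statements merged into one kernel-verified Lean document; each statement's English description precedes it below -/
import Mathlib

section
/- Let I be a CP instrument for (M,S) and ρ a normal state for which a strongly measurable family {ρ_s}_{s∈S} of posterior states exists; then any two strongly F-measurable families {ρ_s} and {ρ'_s} of posterior states with respect to (I,ρ) agree ‖Iρ‖-almost everywhere: ρ_s = ρ'_s for ‖Iρ‖-a.e. s ∈ S. -/
/-!
Bounded by their values at `1`, states make `s ↦ f s X` and `s ↦ g s X` integrable, and equal set
integrals force `f s X = g s X` for a.e. `s`, with a null set depending on `X`. Strong
measurability makes the range of `s ↦ f s - g s` separable, and against a separable set of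
functionals countably many elements of `M` already decide vanishing on all of `M`; so only
countably many null sets are needed.
-/

open scoped ComplexOrder
open Filter MeasureTheory

noncomputable section

local notation "⟪" x ", " y "⟫" => @inner ℂ _ _ x y

variable {H G K : Type} [NormedAddCommGroup H] [InnerProductSpace ℂ H] [CompleteSpace H]
  [NormedAddCommGroup G] [InnerProductSpace ℂ G] [CompleteSpace G]
  [NormedAddCommGroup K] [InnerProductSpace ℂ K] [CompleteSpace K]

/-- Ultraweak convergence of a net of bounded operators (modeled via the weak operator
topology, which coincides with the σ-weak topology on bounded nets). -/
def UWTendsto {ι : Type} (l : Filter ι) (f : ι → H →L[ℂ] H) (X : H →L[ℂ] H) : Prop :=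
  ∀ x y : H, Tendsto (fun i => ⟪y, (f i) x⟫) l (nhds ⟪y, X x⟫)

/-- A normal (ultraweakly continuous) map `B(G) → B(H)`. -/
def IsNormalMap (T : (G →L[ℂ] G) → (H →L[ℂ] H)) : Prop :=
  ∀ (ι : Type) (l : Filter ι) (f : ι → G →L[ℂ] G) (X : G →L[ℂ] G),
    UWTendsto l f X → UWTendsto l (fun i => T (f i)) (T X)

/-- A normal (ultraweakly continuous) functional on `B(H)`. -/
def IsNormalFunctional (φ : (H →L[ℂ] H) → ℂ) : Prop :=
  ∀ (ι : Type) (l : Filter ι) (f : ι → H →L[ℂ] H) (X : H →L[ℂ] H),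
    UWTendsto l f X → Tendsto (fun i => φ (f i)) l (nhds (φ X))

/-- A completely positive map `B(G) → B(H)`. -/
def IsCPMap (T : (G →L[ℂ] G) → (H →L[ℂ] H)) : Prop :=
  ∀ (n : ℕ) (a : Fin n → G →L[ℂ] G) (x : Fin n → H),
    0 ≤ ∑ i, ∑ j, ⟪x i, (T (star (a i) * a j)) (x j)⟫

/-- A completely positive instrument (in dual, Heisenberg form) for a von Neumann algebra,
given as a subset `M ⊆ B(H)`; all axioms are imposed on elements of `M` only. -/
structure IsCPInstrumentOn {S : Type} [MeasurableSpace S] (M : Set (H →L[ℂ] H))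
    (I : Set S → (H →L[ℂ] H) → (H →L[ℂ] H)) : Prop where
  mem : ∀ Δ : Set S, MeasurableSet Δ → ∀ X ∈ M, I Δ X ∈ M
  map_add : ∀ Δ : Set S, MeasurableSet Δ → ∀ X ∈ M, ∀ Y ∈ M, I Δ (X + Y) = I Δ X + I Δ Y
  map_smul : ∀ Δ : Set S, MeasurableSet Δ → ∀ (c : ℂ), ∀ X ∈ M, I Δ (c • X) = c • I Δ X
  unital : I Set.univ 1 = 1
  cp : ∀ Δ : Set S, MeasurableSet Δ → ∀ (n : ℕ) (a : Fin n → H →L[ℂ] H), (∀ i, a i ∈ M) →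
    ∀ x : Fin n → H, 0 ≤ ∑ i, ∑ j, ⟪x i, I Δ (star (a i) * a j) (x j)⟫
  normal : ∀ Δ : Set S, MeasurableSet Δ → ∀ (ι : Type) (l : Filter ι)
    (f : ι → H →L[ℂ] H) (X : H →L[ℂ] H), (∀ i, f i ∈ M) → X ∈ M →
    UWTendsto l f X → UWTendsto l (fun i => I Δ (f i)) (I Δ X)
  additive : ∀ (Δ : ℕ → Set S), (∀ n, MeasurableSet (Δ n)) → Pairwise (Function.onFun Disjoint Δ) →
    ∀ ρ : (H →L[ℂ] H) →L[ℂ] ℂ, IsNormalFunctional ⇑ρ → ∀ X ∈ M,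
      HasSum (fun n => ρ (I (Δ n) X)) (ρ (I (⋃ n, Δ n) X))

namespace PositiveLinearMap

variable {A B : Type*} [CStarAlgebra A] [PartialOrder A] [StarOrderedRing A]
  [CStarAlgebra B] [PartialOrder B] [StarOrderedRing B]

lemma norm_apply_le_four_mul (f : A →ₚ[ℂ] B) (a : A) : ‖f a‖ ≤ 4 * ‖f 1‖ * ‖a‖ := by
  obtain ⟨x, hx_nonneg, hx_norm, ha⟩ := CStarAlgebra.exists_sum_four_nonneg a
  calc ‖f a‖ = ‖∑ i : Fin 4, Complex.I ^ (i : ℕ) • f (x i)‖ := by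
        conv_lhs => rw [ha]
        simp only [map_sum, map_smul]
    _ ≤ ∑ i : Fin 4, ‖f (x i)‖ := by
        refine (norm_sum_le _ _).trans_eq ?_
        simp only [norm_smul, norm_pow, Complex.norm_I, one_pow, one_mul]
    _ ≤ ∑ _i : Fin 4, ‖f 1‖ * ‖a‖ := by
        gcongr with i
        exact (f.norm_apply_le_of_nonneg _ (hx_nonneg i)).trans (by gcongr; exact hx_norm i)
    _ = 4 * ‖f 1‖ * ‖a‖ := by simp [mul_assoc]

end PositiveLinearMap

lemma LinearMap.norm_apply_le_of_forall_star_mul_self_nonneg {A : Type*} [CStarAlgebra A]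
    [PartialOrder A] [StarOrderedRing A] (φ : A →ₗ[ℂ] ℂ) (hφ : ∀ x, 0 ≤ φ (star x * x))
    (a : A) : ‖φ a‖ ≤ 4 * ‖φ 1‖ * ‖a‖ :=
  (PositiveLinearMap.mk₀ φ fun x hx => by
    obtain ⟨s, rfl⟩ := CStarAlgebra.nonneg_iff_eq_star_mul_self.mp hx
    exact hφ s).norm_apply_le_four_mul a

section Separable

variable {𝕜 E F : Type*} [NontriviallyNormedField 𝕜] [SeminormedAddCommGroup E] [NormedSpace 𝕜 E]
  [NormedAddCommGroup F] [NormedSpace 𝕜 F]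

/-- `C` collects, for `d` in a countable dense subset of `T`, rational `q` and `n : ℕ`, one `x ∈ A`
with `‖x‖ ≤ n` and `q < ‖d x‖` whenever there is one. -/
theorem ContinuousLinearMap.exists_countable_forall_eq_zero_of_isSeparable
    {T : Set (E →L[𝕜] F)} (hT : TopologicalSpace.IsSeparable T) (A : Set E) :
    ∃ C ⊆ A, C.Countable ∧ ∀ D ∈ T, (∀ x ∈ C, D x = 0) → ∀ x ∈ A, D x = 0 := by
  obtain ⟨c, hc, hTc⟩ := hT
  have hwitness : ∀ (d : E →L[𝕜] F) (q : ℚ) (n : ℕ), ∃ W ⊆ A, W.Countable ∧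
      ((∃ x ∈ A, ‖x‖ ≤ n ∧ (q : ℝ) < ‖d x‖) → ∃ x ∈ W, ‖x‖ ≤ n ∧ (q : ℝ) < ‖d x‖) := by
    intro d q n
    by_cases h : ∃ x ∈ A, ‖x‖ ≤ n ∧ (q : ℝ) < ‖d x‖
    · obtain ⟨x, hxA, hx⟩ := h
      exact ⟨{x}, by simpa using hxA, Set.countable_singleton x, fun _ => ⟨x, rfl, hx⟩⟩
    · exact ⟨∅, Set.empty_subset A, Set.countable_empty, fun h' => absurd h' h⟩
  choose W hWA hWc hW using hwitness
  refine ⟨⋃ d ∈ c, ⋃ (q : ℚ) (n : ℕ), W d q n,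
    Set.iUnion₂_subset fun d _ => Set.iUnion₂_subset fun q n => hWA d q n,
    hc.biUnion fun d _ => Set.countable_iUnion fun q => Set.countable_iUnion fun n => hWc d q n,
    ?_⟩
  intro D hD hDC x hxA
  by_contra hDx
  set n : ℕ := ⌈‖x‖⌉₊ + 1
  set ε := ‖D x‖
  have hn : (0 : ℝ) < n := by positivity
  have hε : 0 < ε := norm_pos_iff.mpr hDx
  obtain ⟨d, hdc, hDd⟩ := Metric.mem_closure_iff.mp (hTc hD) (ε / (4 * n)) (by positivity)
  have hclose : ∀ y : E, ‖y‖ ≤ n → ‖D y - d y‖ ≤ ε / 4 := fun y hy =>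
    calc ‖D y - d y‖ = ‖(D - d) y‖ := rfl
      _ ≤ ‖D - d‖ * ‖y‖ := (D - d).le_opNorm y
      _ ≤ ε / (4 * n) * n := by gcongr; exact (dist_eq_norm D d ▸ hDd).le
      _ = ε / 4 := by field_simp
  obtain ⟨q, hq_lo, hq_hi⟩ := exists_rat_btwn (show ε / 4 < ε / 2 by linarith)
  have hxn : ‖x‖ ≤ n := by
    simp only [n, Nat.cast_add, Nat.cast_one]
    linarith [Nat.le_ceil ‖x‖]
  have hdx : (q : ℝ) < ‖d x‖ := by
    have := norm_sub_norm_le (D x) (d x)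
    linarith [hclose x hxn]
  obtain ⟨w, hwW, hwn, hdw⟩ := hW d q n ⟨x, hxA, hxn, hdx⟩
  have hDw : D w = 0 := hDC w (Set.mem_biUnion hdc (Set.mem_iUnion₂.mpr ⟨q, n, hwW⟩))
  have := hclose w hwn
  rw [hDw, zero_sub, norm_neg] at this
  linarith

theorem MeasureTheory.ae_forall_apply_eq_zero_of_isSeparable_range {S : Type*}
    [MeasurableSpace S] {μ : Measure S} {D : S → E →L[𝕜] F}
    (hD : TopologicalSpace.IsSeparable (Set.range D)) {A : Set E}
    (h : ∀ x ∈ A, ∀ᵐ s ∂μ, D s x = 0) : ∀ᵐ s ∂μ, ∀ x ∈ A, D s x = 0 := by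
  obtain ⟨C, hCA, hC, hCA_eq⟩ :=
    ContinuousLinearMap.exists_countable_forall_eq_zero_of_isSeparable hD A
  have hCae : ∀ᵐ s ∂μ, ∀ x ∈ C, D s x = 0 := (ae_ball_iff hC).mpr fun x hx => h x (hCA hx)
  filter_upwards [hCae] with s hs using hCA_eq (D s) ⟨s, rfl⟩ hs

end Separable

theorem MeasureTheory.integrable_apply_of_forall_star_mul_self_nonneg {S A : Type*}
    [MeasurableSpace S] {μ : Measure S} [IsFiniteMeasure μ] [CStarAlgebra A] [PartialOrder A]
    [StarOrderedRing A] {φ : S → A →L[ℂ] ℂ} (hφ : StronglyMeasurable φ)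
    (hpos : ∀ s x, 0 ≤ φ s (star x * x)) (hunit : ∀ s, φ s 1 = 1) (a : A) :
    Integrable (fun s => φ s a) μ :=
  Integrable.of_bound
    (_root_.StronglyMeasurable.apply_continuousLinearMap hφ a).aestronglyMeasurable (4 * ‖a‖) <|
    .of_forall fun s => by
      simpa [hunit s] using
        (φ s).toLinearMap.norm_apply_le_of_forall_star_mul_self_nonneg (hpos s) a

/-- Here `ν` plays the role of `‖Iρ‖` and `J Δ X` that of `⟨I(Δ)ρ, X⟩`; the posterior states are
normal states on `B(H)`, compared on `M` only. -/
theorem stmt_8 {S : Type} [MeasurableSpace S] (M : VonNeumannAlgebra H)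
    (ν : Measure S) [IsProbabilityMeasure ν]
    (J : Set S → (H →L[ℂ] H) → ℂ)
    (f g : S → (H →L[ℂ] H) →L[ℂ] ℂ)
    (hf : StronglyMeasurable f) (hg : StronglyMeasurable g)
    (hfstate : ∀ s, (∀ X : H →L[ℂ] H, 0 ≤ f s (star X * X)) ∧ f s 1 = 1 ∧
      IsNormalFunctional ⇑(f s))
    (hgstate : ∀ s, (∀ X : H →L[ℂ] H, 0 ≤ g s (star X * X)) ∧ g s 1 = 1 ∧
      IsNormalFunctional ⇑(g s))
    (hfpost : ∀ Δ : Set S, MeasurableSet Δ → ∀ X ∈ M, ∫ s in Δ, f s X ∂ν = J Δ X)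
    (hgpost : ∀ Δ : Set S, MeasurableSet Δ → ∀ X ∈ M, ∫ s in Δ, g s X ∂ν = J Δ X) :
    ∀ᵐ s ∂ν, ∀ X ∈ M, f s X = g s X := by
  have hae : ∀ X ∈ M, ∀ᵐ s ∂ν, (f - g) s X = 0 := fun X hX => by
    have hfX := integrable_apply_of_forall_star_mul_self_nonneg (μ := ν) hf
      (fun s => (hfstate s).1) (fun s => (hfstate s).2.1) X
    have hgX := integrable_apply_of_forall_star_mul_self_nonneg (μ := ν) hg
      (fun s => (hgstate s).1) (fun s => (hgstate s).2.1) X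
    filter_upwards [hfX.ae_eq_of_forall_setIntegral_eq _ _ hgX
      fun Δ hΔ _ => by rw [hfpost Δ hΔ X hX, hgpost Δ hΔ X hX]] with s hs
    simp [hs]
  filter_upwards [ae_forall_apply_eq_zero_of_isSeparable_range
    (hf.sub hg).isSeparable_range hae] with s hs X hX
  exact sub_eq_zero.mp (hs X hX)

end
end

section
/- Consider the CP instrument I for (L^∞([0,1],m), [0,1]) defined by I(f,Δ) = [χ_Δ]·f, where m is Lebesgue measure. For the normal state ρ = m (i.e., ⟨ρ,[f]⟩ = ∫₀¹ f dx), there exists no family {ρ_x}_{x∈[0,1]} of normal states on L^∞([0,1],m) such that x ↦ ⟨ρ_x,[f]⟩ is measurable and ⟨I(Δ)ρ, [f]⟩ = ∫_Δ ⟨ρ_x,[f]⟩ dm(x) for all f and Borel Δ. -/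
/-!
Testing the posterior condition against `1_s` and integrating over `x ∉ s` shows that, for each
measurable `s`, almost every `x ∉ s` has `ρ_x(s) = 0`. Running over
the countably many half-lines `(-∞, q)`, `(q, ∞)` with `q` rational, one `x` works for all of them
at once, so its density vanishes off the null set `{x}`, contradicting `∫ g x = 1`.
-/

open scoped ComplexOrder
open Filter MeasureTheory

noncomputable section

local notation "⟪" x ", " y "⟫" => @inner ℂ _ _ x y

variable {H G K : Type} [NormedAddCommGroup H] [InnerProductSpace ℂ H] [CompleteSpace H]
  [NormedAddCommGroup G] [InnerProductSpace ℂ G] [CompleteSpace G]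
  [NormedAddCommGroup K] [InnerProductSpace ℂ K] [CompleteSpace K]

/-- Lebesgue measure on `[0,1]`. -/
def m01 : Measure ℝ := volume.restrict (Set.Icc (0:ℝ) 1)

open Set

section Kernel

variable {α β : Type*} [MeasurableSpace α] [MeasurableSpace β] {μ : Measure α}
  {ν : Measure β}

lemma setIntegral_mem_Icc_of_integral_eq_one {f : β → ℝ} (hint : Integrable f ν)
    (hnn : 0 ≤ᵐ[ν] f) (hone : ∫ y, f y ∂ν = 1) (s : Set β) :
    ∫ y in s, f y ∂ν ∈ Icc 0 1 :=
  ⟨setIntegral_nonneg_of_ae hnn, hone ▸ setIntegral_le_integral hint hnn⟩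

/-- A nonnegative function with zero integral over `t` vanishes a.e. on `t`: apply this to the
function `x ↦ ∫_s g x`, bounded by `1`, and then to each `g x`. -/
lemma ae_restrict_eq_zero_of_setIntegral_setIntegral_eq_zero [IsFiniteMeasure μ]
    {g : α → β → ℝ} (hint : ∀ x, Integrable (g x) ν) (hnn : ∀ x, 0 ≤ᵐ[ν] g x)
    (hone : ∀ x, ∫ y, g x y ∂ν = 1) {s : Set β} {t : Set α} (ht : MeasurableSet t)
    (hmeas : Measurable fun x => ∫ y in s, g x y ∂ν)
    (hzero : ∫ x in t, (∫ y in s, g x y ∂ν) ∂μ = 0) :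
    ∀ᵐ x ∂μ, x ∈ t → g x =ᵐ[ν.restrict s] 0 := by
  have hbound x := setIntegral_mem_Icc_of_integral_eq_one (hint x) (hnn x) (hone x) s
  have hintegrable : IntegrableOn (fun x => ∫ y in s, g x y ∂ν) t μ :=
    Integrable.mono' (integrable_const 1) hmeas.aestronglyMeasurable <| ae_of_all _ fun x =>
      abs_le.2 ⟨by linarith [(hbound x).1], (hbound x).2⟩
  have hvanish := (setIntegral_eq_zero_iff_of_nonneg_ae
    (ae_of_all _ fun x => (hbound x).1) hintegrable).1 hzero
  filter_upwards [(ae_restrict_iff' ht).1 hvanish] with x hx hxt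
  exact (setIntegral_eq_zero_iff_of_nonneg_ae (ae_restrict_of_ae (hnn x))
    (hint x).integrableOn).1 (hx hxt)

lemma ae_notMem_ae_restrict_eq_zero_of_indicator [IsFiniteMeasure μ] {g : α → α → ℝ}
    (hint : ∀ x, Integrable (g x) μ) (hnn : ∀ x, 0 ≤ᵐ[μ] g x) (hone : ∀ x, ∫ y, g x y ∂μ = 1)
    {s : Set α} (hs : MeasurableSet s)
    (hmeas : Measurable fun x => ∫ y, s.indicator 1 y * g x y ∂μ)
    (hpost : ∫ x in sᶜ, (∫ y, s.indicator 1 y * g x y ∂μ) ∂μ =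
      ∫ x in sᶜ, s.indicator 1 x ∂μ) :
    ∀ᵐ x ∂μ, x ∉ s → g x =ᵐ[μ.restrict s] 0 := by
  have hind x : ∫ y, s.indicator 1 y * g x y ∂μ = ∫ y in s, g x y ∂μ := by
    simp only [← indicator_mul_left, Pi.one_apply, one_mul, integral_indicator hs]
  have hrhs : ∫ x in sᶜ, s.indicator (1 : α → ℝ) x ∂μ = 0 :=
    setIntegral_eq_zero_of_forall_eq_zero fun x hx => indicator_of_notMem hx _
  simp only [hind, hrhs] at hmeas hpost
  exact ae_restrict_eq_zero_of_setIntegral_setIntegral_eq_zero (t := sᶜ) hint hnn hone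
    hs.compl hmeas hpost

end Kernel

lemma ae_eq_zero_of_forall_rat_Iio_Ioi {ν : Measure ℝ} [NullSingletonClass ν] {f : ℝ → ℝ}
    {x : ℝ}
    (hlt : ∀ q : ℚ, (q : ℝ) ≤ x → f =ᵐ[ν.restrict (Iio (q : ℝ))] 0)
    (hgt : ∀ q : ℚ, x ≤ q → f =ᵐ[ν.restrict (Ioi (q : ℝ))] 0) :
    f =ᵐ[ν] 0 := by
  have hhalf : ∀ᵐ y ∂ν, ∀ q : ℚ,
      ((q : ℝ) ≤ x → y < (q : ℝ) → f y = 0) ∧ (x ≤ q → (q : ℝ) < y → f y = 0) :=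
    ae_all_iff.2 fun q =>
      (eventually_imp_distrib_left.2 fun hq =>
        (ae_restrict_iff' measurableSet_Iio).1 (hlt q hq)).and
      (eventually_imp_distrib_left.2 fun hq =>
        (ae_restrict_iff' measurableSet_Ioi).1 (hgt q hq))
  filter_upwards [hhalf, Measure.ae_ne ν x] with y hy hyx
  rcases hyx.lt_or_gt with hyx | hxy
  · obtain ⟨q, hyq, hqx⟩ := exists_rat_btwn hyx
    exact (hy q).1 hqx.le hyq
  · obtain ⟨q, hxq, hqy⟩ := exists_rat_btwn hxy
    exact (hy q).2 hxq.le hqy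

instance : IsProbabilityMeasure m01 := ⟨by rw [m01, Measure.restrict_apply_univ]; simp⟩

instance : NullSingletonClass m01 := by unfold m01; infer_instance

/-- For the CP instrument `I(f,Δ) = χ_Δ f` on `L^∞([0,1],m)` and the state `ρ = m`, there is
no family of posterior states: normal states on `L^∞([0,1],m)` are exactly probability
densities `g x ∈ L¹`, pairing `⟨ρ_x, [f]⟩ = ∫ f(y) g(x,y) dm(y)`, and no measurable such
family can satisfy `∫_Δ ⟨ρ_x,[f]⟩ dm(x) = ⟨I(Δ)ρ, [f]⟩ = ∫_Δ f dm`. -/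
theorem stmt_10 :
    ¬ ∃ g : ℝ → ℝ → ℝ,
      (∀ x, Integrable (g x) m01) ∧
      (∀ x, ∀ᵐ y ∂m01, 0 ≤ g x y) ∧
      (∀ x, ∫ y, g x y ∂m01 = 1) ∧
      (∀ f : ℝ → ℝ, Measurable f → (∃ C, ∀ y, |f y| ≤ C) →
        Measurable fun x => ∫ y, f y * g x y ∂m01) ∧
      (∀ f : ℝ → ℝ, Measurable f → (∃ C, ∀ y, |f y| ≤ C) →
        ∀ Δ : Set ℝ, MeasurableSet Δ →
          ∫ x in Δ, (∫ y, f y * g x y ∂m01) ∂m01 = ∫ x in Δ, f x ∂m01) := by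
  rintro ⟨g, hint, hnn, hone, hmeas, hpost⟩
  have hbdd (s : Set ℝ) : ∃ C, ∀ y, |s.indicator (1 : ℝ → ℝ) y| ≤ C :=
    ⟨1, fun y => by by_cases hy : y ∈ s <;> simp [hy]⟩
  have hoff (s : Set ℝ) (hs : MeasurableSet s) :=
    ae_notMem_ae_restrict_eq_zero_of_indicator hint hnn hone hs
      (hmeas _ (measurable_one.indicator hs) (hbdd s))
      (hpost _ (measurable_one.indicator hs) (hbdd s) sᶜ hs.compl)
  have hgood : ∀ᵐ x ∂m01, ∀ q : ℚ,
      ((q : ℝ) ≤ x → g x =ᵐ[m01.restrict (Iio (q : ℝ))] 0) ∧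
        (x ≤ q → g x =ᵐ[m01.restrict (Ioi (q : ℝ))] 0) := by
    refine ae_all_iff.2 fun q => ?_
    filter_upwards [hoff _ measurableSet_Iio, hoff _ measurableSet_Ioi] with x h₁ h₂
    exact ⟨fun hq => h₁ hq.not_gt, fun hq => h₂ hq.not_gt⟩
  obtain ⟨x, hx⟩ := hgood.exists
  have hzero := ae_eq_zero_of_forall_rat_Iio_Ioi (fun q => (hx q).1) (fun q => (hx q).2)
  exact one_ne_zero ((hone x).symm.trans (integral_eq_zero_of_ae hzero))

end
end
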